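/- Fix a social choice function F on 3 alternatives {a,b,c} and fix z ∈ {0,1}^n. Identify the set of profiles x with x^{a,b}=z with {0,1,2}^n (each voter's position of c: above both, between, below both). Let A = {v : F(x)=a} and B = {v : F(x)=b} under this identification. Suppose (v_{-i}, v_i, v'_i) ∈ ∂_i A, i.e., F outputs a at the profile with voter i's value v_i and outputs some t ≠ a when voter i lowers c to v'_i > v_i (keeping his a-vs-b preference). Then either voter i's switch from v_i to v'_i is a profitable manipulation at the first profile, or the reverse switch is a profitable manipulation at the second profile. -/
import Mathlib


open Finset

/-- A linear order on the three alternatives `a = 0`, `b = 1`, `c = 2`, represented by its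
ranking permutation: `σ d` is the rank of alternative `d` (rank `0` is most preferred). -/
abbrev Order3 := Equiv.Perm (Fin 3)

/-- A profile of `n` voters on three alternatives. -/
abbrev Profile (n : ℕ) := Fin n → Order3

/-- Voter with ranking `σ` prefers alternative `d` over alternative `e`. -/
def Prefers (σ : Order3) (d e : Fin 3) : Prop := σ d < σ e

abbrev Cube (n : ℕ) := Fin n → Fin 3

/-- The ranking with `a ≻ b` and `c` placed above both (`v = 0`), between them (`v = 1`),
or below both (`v = 2`). -/
def basePerm : Fin 3 → Order3 :=
  ![(Equiv.swap 1 2).trans (Equiv.swap 0 1), Equiv.swap 1 2, 1]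

/-- The linear order of a voter whose preference between `a = 0` and `b = 1` is `z`
(`true` means `a ≻ b`) and whose position of `c = 2` is encoded by `v ∈ {0,1,2}`
(above both, between, below both). -/
def decode (z : Bool) (v : Fin 3) : Order3 :=
  if z then basePerm v else (Equiv.swap 0 1).trans (basePerm v)

/-- The profile with fixed `(a,b)`-column `z` encoded by the point `v ∈ {0,1,2}ⁿ`. -/
def prof (n : ℕ) (z : Fin n → Bool) (v : Cube n) : Profile n :=
  fun i => decode (z i) (v i)

lemma key8 : ∀ (z : Bool) (x v' t : Fin 3), x < v' → t ≠ 0 →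
    Prefers (decode z x) t 0 ∨ Prefers (decode z v') 0 t := by unfold Prefers; decide

/-- If `F` outputs `a = 0` at the profile encoded by `v` and outputs something else when voter
`i` lowers `c` from `v i` to `v' > v i` (keeping the `a`-vs-`b` column `z` fixed), i.e. the
triple lies in `∂ᵢ A` for `A = {v : F = a}`, then either the switch is a profitable
manipulation at the first profile or the reverse switch is a profitable manipulation at the
second profile. -/
theorem stmt8 (n : ℕ) (F : Profile n → Fin 3) (z : Fin n → Bool) (i : Fin n)
    (v : Cube n) (v' : Fin 3) (hv : v i < v')
    (hA : F (prof n z v) = 0) (hA' : F (prof n z (Function.update v i v')) ≠ 0) :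
    Prefers (prof n z v i) (F (prof n z (Function.update v i v'))) (F (prof n z v)) ∨
    Prefers (prof n z (Function.update v i v') i) (F (prof n z v))
      (F (prof n z (Function.update v i v'))) := by
  have h1 : prof n z v i = decode (z i) (v i) := rfl
  have h2 : prof n z (Function.update v i v') i = decode (z i) v' := by
    simp [prof, Function.update_self]
  rw [hA, h1, h2]
  exact key8 (z i) (v i) v' _ hv hA'
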